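/- For all integers k ≥ 0, n ≥ 0 and every fixed a ∈ ℝ, the k-th derivative of the Kravchuk polynomial with respect to x satisfies d^k/dx^k K_n(x,a) = (−1)^k · ∑_{i=0}^{n−k} K_i(x,a) · S^{(k)}(n−i), where the sum is empty (so the derivative is 0) when k > n. -/

import Mathlib

/-- Generalized binomial coefficient `C(t, k) = t(t-1)⋯(t-k+1)/k!` of a real number. -/
noncomputable def genBinom (t : ℝ) (k : ℕ) : ℝ :=
  (∏ j ∈ Finset.range k, (t - j)) / (Nat.factorial k)

/-- The binary Kravchuk polynomial `K_n(x,a) = ∑_{i=0}^n (-1)^i C(x,i) C(a-x, n-i)`. -/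
noncomputable def K (n : ℕ) (x a : ℝ) : ℝ :=
  ∑ i ∈ Finset.range (n + 1), (-1 : ℝ) ^ i * genBinom x i * genBinom (a - x) (n - i)

/-- Signed Stirling numbers of the first kind: `t(t-1)⋯(t-m+1) = ∑_k s(m,k) t^k`. -/
noncomputable def stirling1 (m k : ℕ) : ℝ := (descPochhammer ℝ m).coeff k

/-- `S^{(k)}(n) = ∑_{m=k}^n binom(n-1,m-1) (2^m k!/m!) s(m,k)` for `k ≥ 1` (zero for
`n < k`), with `S^{(0)}(n) = 1` if `n = 0` and `0` otherwise. -/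
noncomputable def Sfun (k n : ℕ) : ℝ :=
  if k = 0 then (if n = 0 then 1 else 0)
  else ∑ m ∈ Finset.Icc k n,
    ((n - 1).choose (m - 1) : ℝ) * (2 ^ m * (Nat.factorial k) / (Nat.factorial m))
      * stirling1 m k

/-!
Work in `ℝ[X]⟦Z⟧`, `x` being the polynomial variable, and differentiate in `x` coefficientwise.
The Kravchuk polynomials have generating function `(1 - Z)^x (1 + Z)^(a - x)`, and
`∂ₓ (1 + Z)^x = log (1 + Z) · (1 + Z)^x`: by Vandermonde `(1 + Z)^(x + y) = (1 + Z)^x (1 + Z)^y`,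
and the coefficient of `y` in `C(y, m)` is `(-1)^(m+1) / m`. So `∂ₓ^k` multiplies the generating
function by `(log (1 - Z) - log (1 + Z))^k`, and it remains to see that `S^{(k)}(n)` is the
`n`-th coefficient of `log ((1 + Z) / (1 - Z))^k`. Setting `x = 0` in `∂ₓ^k (1 + Z)^x` gives
`log (1 + Z)^k = k! ∑ s(m,k) Z^m / m!`. Substituting `w = 2Z / (1 - Z)` for `Z` turns these
coefficients into `S^{(k)}`, since the `n`-th coefficient of `w^m` is `2^m C(n-1, m-1)`, and turns
`log (1 + Z)` into `log (1 + w) = log (1 + Z) - log (1 - Z)`, which the binomial theorem verifies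
coefficientwise. Substitution is multiplicative, so the `k`-th powers correspond as well.
-/

open Finset
open scoped Nat Polynomial

namespace PowerSeries

section DerivationMapCoeffs

variable {R A : Type*} [CommRing R] [CommRing A] [Algebra R A]

noncomputable def derivationMapCoeffs (d : Derivation R A A) : Derivation R A⟦X⟧ A⟦X⟧ where
  toFun f := mk fun n => d (coeff n f)
  map_add' f g := by ext; simp
  map_smul' r f := by ext; simp
  map_one_eq_zero' := by ext n; simp [coeff_one, apply_ite d]
  leibniz' f g := by
    ext n
    rw [smul_eq_mul, smul_eq_mul, mul_comm g]
    simp only [LinearMap.coe_mk, AddHom.coe_mk, coeff_mk, map_add, coeff_mul, map_sum,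
      Derivation.leibniz, smul_eq_mul, Finset.sum_add_distrib]
    congr 1
    exact Finset.sum_congr rfl fun _ _ => mul_comm _ _

variable (d : Derivation R A A)

@[simp]
lemma coeff_derivationMapCoeffs (f : A⟦X⟧) (n : ℕ) :
    coeff n (derivationMapCoeffs d f) = d (coeff n f) :=
  coeff_mk n (fun m => d (coeff m f))

lemma coeff_iterate_derivationMapCoeffs (f : A⟦X⟧) (n k : ℕ) :
    coeff n ((derivationMapCoeffs d)^[k] f) = d^[k] (coeff n f) := by
  induction k generalizing f with
  | zero => rfl
  | succ k ih =>
    rw [Function.iterate_succ_apply, ih, coeff_derivationMapCoeffs, Function.iterate_succ_apply]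

lemma derivationMapCoeffs_map_algebraMap_mul (c : R⟦X⟧) (f : A⟦X⟧) :
    derivationMapCoeffs d (map (algebraMap R A) c * f)
      = map (algebraMap R A) c * derivationMapCoeffs d f := by
  have hc : derivationMapCoeffs d (map (algebraMap R A) c) = 0 := by ext n; simp
  simp [hc]

lemma iterate_derivationMapCoeffs_of_eq_mul {c : R⟦X⟧} {f : A⟦X⟧}
    (h : derivationMapCoeffs d f = map (algebraMap R A) c * f) (k : ℕ) :
    (derivationMapCoeffs d)^[k] f = map (algebraMap R A) (c ^ k) * f := by
  induction k with
  | zero => simp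
  | succ k ih =>
    rw [Function.iterate_succ_apply', ih, derivationMapCoeffs_map_algebraMap_mul, h, pow_succ,
      map_mul, mul_assoc]

lemma derivationMapCoeffs_rescale (r : R) (f : A⟦X⟧) :
    derivationMapCoeffs d (rescale (algebraMap R A r) f)
      = rescale (algebraMap R A r) (derivationMapCoeffs d f) := by
  ext n
  simp [← map_pow]

end DerivationMapCoeffs

lemma map_binomialSeries {A B : Type*} [CommRing A] [CommRing B] [BinomialRing A]
    [BinomialRing B] (f : A →+* B) (r : A) :
    map f (binomialSeries A r) = binomialSeries B (f r) := by
  ext n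
  simp [Ring.map_choose]

lemma coeff_pow_eq_zero_of_lt {R : Type*} [CommRing R] {g : R⟦X⟧} (hg : constantCoeff g = 0)
    {m n : ℕ} (h : n < m) : coeff n (g ^ m) = 0 :=
  coeff_of_lt_order n ((Nat.cast_lt.mpr h).trans_le (le_order_pow_of_constantCoeff_eq_zero m hg))

lemma coeff_subst_eq_sum {R : Type*} [CommRing R] {g : R⟦X⟧} (hg : constantCoeff g = 0)
    (f : R⟦X⟧) (n : ℕ) :
    coeff n (f.subst g) = ∑ m ∈ range (n + 1), coeff m f * coeff n (g ^ m) := by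
  rw [coeff_subst' (HasSubst.of_constantCoeff_zero' hg)]
  refine finsum_eq_sum_of_support_subset _ fun m hm => ?_
  by_contra hmn
  refine Function.mem_support.mp hm ?_
  change coeff m f • coeff n (g ^ m) = 0
  rw [coeff_pow_eq_zero_of_lt hg (by simpa using hmn), smul_zero]

end PowerSeries

section BinomialPolynomial

open Polynomial

lemma descPochhammer_succ_coeff_one {R : Type*} [CommRing R] (n : ℕ) :
    (descPochhammer R (n + 1)).coeff 1 = (-1) ^ n * n ! := by
  rw [descPochhammer_succ_left, coeff_X_mul, coeff_zero_eq_eval_zero, eval_comp,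
    eval_sub, eval_X, eval_one, zero_sub, descPochhammer_eval_eq_ascPochhammer,
    show (-1 : R) - n + 1 = -n by ring, ascPochhammer_eval_neg_eq_descPochhammer,
    descPochhammer_eval_eq_descFactorial, Nat.descFactorial_self]

lemma Polynomial.coe_derivative' {R : Type*} [CommSemiring R] :
    ⇑(derivative' : Derivation R R[X] R[X]) = derivative := rfl

variable {K : Type*} [Field K] [CharZero K]

lemma Polynomial.choose_X_eq (n : ℕ) :
    Ring.choose (X : K[X]) n = C (n ! : K)⁻¹ * descPochhammer K n := by
  rw [← aeval_X_left_apply (descPochhammer K n), ← descPochhammer_map (algebraMap ℤ K),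
    aeval_map_algebraMap, aeval_eq_smeval, Ring.descPochhammer_eq_factorial_smul_choose,
    nsmul_eq_mul, ← mul_assoc, ← C_eq_natCast, ← C_mul,
    inv_mul_cancel₀ (Nat.cast_ne_zero.mpr n.factorial_ne_zero), C_1, one_mul]

lemma Polynomial.choose_comp (p q : K[X]) (n : ℕ) :
    (Ring.choose p n).comp q = Ring.choose (p.comp q) n := by
  simpa using Ring.map_choose (compRingHom q) p n

lemma Polynomial.eval_choose (p : K[X]) (x : K) (n : ℕ) :
    (Ring.choose p n).eval x = Ring.choose (p.eval x) n := by
  simpa using Ring.map_choose (evalRingHom x) p n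

lemma Polynomial.coeff_one_choose_X (n : ℕ) :
    (Ring.choose (X : K[X]) n).coeff 1 = PowerSeries.coeff n (PowerSeries.log K) := by
  cases n with
  | zero => simp [coeff_one]
  | succ n =>
    have : (n ! : K) ≠ 0 := Nat.cast_ne_zero.mpr n.factorial_ne_zero
    rw [choose_X_eq, coeff_C_mul, descPochhammer_succ_coeff_one, PowerSeries.coeff_log,
      if_neg n.succ_ne_zero, Nat.factorial_succ]
    push_cast
    field_simp
    ring

/-- Taylor expansion at `y` turns `choose X n` into `choose (X + y) n`, which Vandermonde's
identity splits; its linear coefficient is the derivative at `y`. -/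
lemma Polynomial.derivative_choose_X (n : ℕ) :
    derivative (Ring.choose (X : K[X]) n)
      = ∑ ij ∈ antidiagonal n,
          C (PowerSeries.coeff ij.1 (PowerSeries.log K)) * Ring.choose X ij.2 := by
  refine Polynomial.funext fun y => ?_
  rw [← taylor_coeff_one, taylor_apply, choose_comp, X_comp,
    Ring.add_choose_eq n (Commute.all _ _), finsetSum_coeff, eval_finsetSum]
  refine sum_congr rfl fun ij _ => ?_
  rw [← Ring.map_choose C, coeff_mul_C, coeff_one_choose_X, eval_mul, eval_C, eval_choose,
    eval_X]

end BinomialPolynomial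

section BinomialSeries

open PowerSeries

variable {K : Type*} [Field K] [CharZero K]

lemma derivationMapCoeffs_binomialSeries (p : K[X]) :
    derivationMapCoeffs Polynomial.derivative' (binomialSeries K[X] p)
      = C p.derivative * map Polynomial.C (log K) * binomialSeries K[X] p := by
  refine PowerSeries.ext fun n => ?_
  have hp : Ring.choose p n = (Ring.choose Polynomial.X n).comp p := by
    rw [Polynomial.choose_comp, Polynomial.X_comp]
  rw [mul_assoc, coeff_C_mul, coeff_derivationMapCoeffs, Polynomial.derivative'_apply, coeff_mul,
    binomialSeries_coeff, smul_eq_mul, mul_one, hp, Polynomial.derivative_comp,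
    Polynomial.derivative_choose_X, Polynomial.sum_comp]
  simp only [Polynomial.mul_comp, Polynomial.C_comp, Polynomial.choose_comp, Polynomial.X_comp,
    coeff_map, binomialSeries_coeff, smul_eq_mul, mul_one]

lemma coeff_log_pow (k m : ℕ) :
    coeff m (log K ^ k) = k ! * (descPochhammer K m).coeff k / m ! := by
  have hX : derivationMapCoeffs Polynomial.derivative' (binomialSeries K[X] (Polynomial.X : K[X]))
      = map Polynomial.C (log K) * binomialSeries K[X] (Polynomial.X : K[X]) := by
    rw [derivationMapCoeffs_binomialSeries, Polynomial.derivative_X, map_one, one_mul]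
  have h := congrArg (fun F => coeff m (map (Polynomial.evalRingHom 0) F))
    (iterate_derivationMapCoeffs_of_eq_mul _ hX k)
  simp only [coeff_map, coeff_iterate_derivationMapCoeffs, map_mul, map_binomialSeries,
    Polynomial.coe_evalRingHom, Polynomial.eval_X, binomialSeries_zero, mul_one,
    Polynomial.algebraMap_eq, Polynomial.eval_C, binomialSeries_coeff, smul_eq_mul,
    ← Polynomial.coeff_zero_eq_eval_zero,
    Polynomial.coe_derivative', Polynomial.coeff_iterate_derivative, zero_add,
    Nat.descFactorial_self, nsmul_eq_mul, Polynomial.choose_X_eq, Polynomial.coeff_C_mul] at h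
  rw [← h]
  field_simp

end BinomialSeries

lemma mul_sum_range_choose_mul_pow_div {K : Type*} [Field K] [CharZero K] (x : K) (t : ℕ) :
    (t + 1) * ∑ j ∈ range (t + 1), (t.choose j : K) * x ^ (j + 1) / (j + 1)
      = (x + 1) ^ (t + 1) - 1 := by
  rw [add_pow, sum_range_succ' (fun m => x ^ m * 1 ^ (t + 1 - m) * ((t + 1).choose m : K)),
    mul_sum]
  simp only [one_pow, mul_one, pow_zero, Nat.choose_zero_right, Nat.cast_one, add_sub_cancel_right]
  refine sum_congr rfl fun j _ => ?_
  have h := congrArg (Nat.cast : ℕ → K) (Nat.add_one_mul_choose_eq t j)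
  push_cast at h
  field_simp
  linear_combination x ^ (j + 1) * h

section LogRatio

open PowerSeries

variable {K : Type*} [Field K]

variable (K) in
/-- `2Z / (1 - Z)`, so that `1 + cayley K = (1 + Z) / (1 - Z)`. -/
noncomputable def cayley : K⟦X⟧ := 2 * X * (invOneSubPow K 1 : K⟦X⟧)

lemma constantCoeff_cayley : constantCoeff (cayley K) = 0 := by
  simp [cayley]

lemma coeff_cayley_pow {m : ℕ} (hm : m ≠ 0) (n : ℕ) :
    coeff n (cayley K ^ m) = if m ≤ n then 2 ^ m * ((n - 1).choose (m - 1) : K) else 0 := by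
  obtain ⟨j, rfl⟩ : ∃ j, m = j + 1 := ⟨m - 1, by omega⟩
  have hpow : (invOneSubPow K 1) ^ (j + 1) = invOneSubPow K (j + 1) := by
    rw [invOneSubPow_eq_inv_one_sub_pow, ← pow_mul, one_mul, ← invOneSubPow_eq_inv_one_sub_pow]
  rw [cayley, mul_pow, mul_pow, ← Units.val_pow_eq_pow_val, hpow, mul_comm (2 ^ _ : K⟦X⟧),
    mul_assoc, coeff_X_pow_mul', invOneSubPow_val_succ_eq_mk_add_choose]
  split_ifs with h
  · rw [show (2 : K⟦X⟧) ^ (j + 1) = C (2 ^ (j + 1)) by rw [map_pow, map_ofNat], coeff_C_mul,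
      coeff_mk, show j + (n - (j + 1)) = n - 1 by omega, Nat.add_sub_cancel]
  · rfl

variable [CharZero K]

variable (K) in
/-- `log (1 + Z) - log (1 - Z) = log ((1 + Z) / (1 - Z))`. -/
noncomputable def logRatio : K⟦X⟧ := log K - rescale (-1) (log K)

lemma constantCoeff_logRatio : constantCoeff (logRatio K) = 0 := by
  rw [← coeff_zero_eq_constantCoeff_apply, logRatio, map_sub, coeff_rescale]
  simp

lemma log_subst_cayley : (log K).subst (cayley K) = logRatio K := by
  ext n
  rw [coeff_subst_eq_sum constantCoeff_cayley]
  rcases n with _ | t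
  · simp [logRatio, coeff_rescale, -coeff_zero_eq_constantCoeff]
  have hterm : ∀ j ∈ range (t + 1), coeff (j + 1) (log K) * coeff (t + 1) (cayley K ^ (j + 1))
      = -((t.choose j : K) * (-2) ^ (j + 1) / (j + 1)) := by
    intro j hj
    rw [coeff_cayley_pow (by omega : j + 1 ≠ 0), if_pos (by simp at hj; omega), coeff_log,
      if_neg j.succ_ne_zero, Nat.succ_sub_one]
    push_cast
    rw [neg_pow (2 : K)]
    ring
  have hsum := mul_sum_range_choose_mul_pow_div (-2 : K) t
  rw [sum_range_succ', sum_congr rfl hterm, sum_neg_distrib]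
  simp only [logRatio, map_sub, coeff_rescale, coeff_log, if_neg t.succ_ne_zero, ↓reduceIte,
    zero_mul, add_zero, map_div₀, map_pow, map_neg, map_one, map_natCast]
  push_cast at hsum ⊢
  field_simp
  have hsq : ((-1 : K) ^ (t + 1)) ^ 2 = 1 := by
    rw [← pow_mul, mul_comm, pow_mul, neg_one_sq, one_pow]
  rw [pow_succ (-1 : K) (t + 1)]
  linear_combination -hsum - hsq

end LogRatio

open PowerSeries in
lemma Sfun_eq_coeff_logRatio_pow (k n : ℕ) : Sfun k n = coeff n (logRatio ℝ ^ k) := by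
  rw [← log_subst_cayley, ← subst_pow (HasSubst.of_constantCoeff_zero' constantCoeff_cayley),
    coeff_subst_eq_sum constantCoeff_cayley]
  rcases Nat.eq_zero_or_pos k with rfl | hk
  · simp [Sfun, coeff_one]
  have hsub : Icc k n ⊆ range (n + 1) := fun m hm => by simp at hm ⊢; omega
  rw [Sfun, if_neg hk.ne', ← sum_subset hsub fun m hmr hm => ?_]
  · refine sum_congr rfl fun m hm => ?_
    rw [mem_Icc] at hm
    rw [coeff_log_pow, coeff_cayley_pow (by omega), if_pos hm.2, stirling1]
    ring
  · rw [coeff_pow_eq_zero_of_lt constantCoeff_log (by simp at hmr hm; omega), zero_mul]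

section Kravchuk

open PowerSeries

variable {K : Type*} [Field K] [CharZero K]

/-- `(1 - Z)^x (1 + Z)^(a - x)`, where `x` is the polynomial variable. -/
noncomputable def kravchukSeries (a : K) : K[X]⟦X⟧ :=
  rescale (-1) (binomialSeries K[X] (Polynomial.X : K[X]))
    * binomialSeries K[X] (Polynomial.C a - Polynomial.X)

lemma derivationMapCoeffs_kravchukSeries (a : K) :
    derivationMapCoeffs Polynomial.derivative' (kravchukSeries a)
      = map Polynomial.C (-logRatio K) * kravchukSeries a := by
  have hA : derivationMapCoeffs Polynomial.derivative'
      (rescale (-1) (binomialSeries K[X] (Polynomial.X : K[X])))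
        = map Polynomial.C (rescale (-1) (log K))
          * rescale (-1) (binomialSeries K[X] (Polynomial.X : K[X])) := by
    have h : (-1 : K[X]) = algebraMap K K[X] (-1) := by simp
    rw [h, derivationMapCoeffs_rescale, derivationMapCoeffs_binomialSeries, Polynomial.derivative_X,
      map_one, one_mul, map_mul, Polynomial.algebraMap_eq, rescale_map]
  rw [kravchukSeries, Derivation.leibniz, hA, derivationMapCoeffs_binomialSeries, logRatio,
    map_sub, Polynomial.derivative_C, Polynomial.derivative_X]
  simp only [smul_eq_mul, zero_sub, map_neg, map_one, map_sub]
  ring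

end Kravchuk

section KravchukReal

open PowerSeries

lemma genBinom_eq_choose (t : ℝ) (k : ℕ) : genBinom t k = Ring.choose t k := by
  rw [genBinom, ← Polynomial.eval_X (x := t), ← Polynomial.eval_choose, Polynomial.choose_X_eq,
    Polynomial.eval_mul, Polynomial.eval_C, descPochhammer_eval_eq_prod_range, Polynomial.eval_X,
    div_eq_inv_mul]

lemma K_eq_eval_coeff_kravchukSeries (n : ℕ) (x a : ℝ) :
    K n x a = (coeff n (kravchukSeries a)).eval x := by
  rw [kravchukSeries, coeff_mul, Polynomial.eval_finsetSum,
    Finset.Nat.sum_antidiagonal_eq_sum_range_succ_mk, K]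
  refine sum_congr rfl fun i _ => ?_
  simp [coeff_rescale, genBinom_eq_choose, Polynomial.eval_choose]

lemma iterate_derivative_coeff_kravchukSeries (k n : ℕ) (a : ℝ) :
    Polynomial.derivative^[k] (coeff n (kravchukSeries a))
      = ∑ i ∈ range (n + 1 - k),
          coeff i (kravchukSeries a) * Polynomial.C ((-1) ^ k * Sfun k (n - i)) := by
  rw [← Polynomial.coe_derivative', ← coeff_iterate_derivationMapCoeffs,
    iterate_derivationMapCoeffs_of_eq_mul _ (derivationMapCoeffs_kravchukSeries a), mul_comm,
    coeff_mul, Finset.Nat.sum_antidiagonal_eq_sum_range_succ_mk,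
    ← sum_subset (range_subset_range.2 (Nat.sub_le (n + 1) k)) fun i hin hik => ?_]
  · refine sum_congr rfl fun i _ => ?_
    rw [coeff_map, Polynomial.algebraMap_eq, Sfun_eq_coeff_logRatio_pow, neg_pow,
      show (-1 : ℝ⟦X⟧) ^ k = C ((-1) ^ k) by simp, coeff_C_mul]
  · simp only [mem_range, not_lt] at hin hik
    rw [coeff_map, coeff_pow_eq_zero_of_lt (by simp [constantCoeff_logRatio]) (by omega),
      map_zero, mul_zero]

end KravchukReal

lemma Polynomial.iterate_deriv_eval {𝕜 : Type*} [NontriviallyNormedField 𝕜] (p : 𝕜[X])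
    (k : ℕ) :
    deriv^[k] (fun t => p.eval t) = fun t => (derivative^[k] p).eval t := by
  induction k generalizing p with
  | zero => rfl
  | succ k ih =>
    have hderiv : _root_.deriv (fun t => p.eval t) = fun t => (derivative p).eval t := by
      ext t
      exact Polynomial.deriv p
    rw [Function.iterate_succ_apply, hderiv, ih, Function.iterate_succ_apply]

/-- `d^k/dx^k K_n(x,a) = (-1)^k ∑_{i=0}^{n-k} K_i(x,a) S^{(k)}(n-i)`
(the sum being empty when `k > n`). -/
theorem kravchuk_iterated_deriv_x (k n : ℕ) (a x : ℝ) :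
    deriv^[k] (fun t : ℝ => K n t a) x
      = (-1 : ℝ) ^ k * ∑ i ∈ Finset.range (n + 1 - k), K i x a * Sfun k (n - i) := by
  simp_rw [K_eq_eval_coeff_kravchukSeries, Polynomial.iterate_deriv_eval,
    iterate_derivative_coeff_kravchukSeries, Polynomial.eval_finsetSum, mul_sum]
  refine sum_congr rfl fun i _ => ?_
  rw [Polynomial.eval_mul, Polynomial.eval_C]
  ring
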